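/- Let Q = k[[x,y,z]] and suppose R = Q/(I1 ∩ I2) is compressed of type 2 with socle polynomial χ^{s1}+χ^{s}, arising from homogeneous compressed Gorenstein ideals I1, I2, with ⌈(s+1)/2⌉ = t (the initial degree of I1 ∩ I2) and a = s1 − t + 1. Then the first graded Betti number in degree t satisfies β_{1t}(R) = (t+1) − binom(a+1,2) if s is odd, and β_{1t}(R) = (2t+1) − binom(a+1,2) if s is even. -/

import Mathlib

open MvPolynomial

/-- The ideal generated by the variables (the graded maximal ideal `q`). -/
noncomputable def qIdeal (k : Type*) [Field k] (e : ℕ) : Ideal (MvPolynomial (Fin e) k) :=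
  Ideal.span (Set.range X)

/-- The Hilbert function of `Q/J`: `h(i) = dim_k (q^i + J)/(q^{i+1} + J)`. -/
noncomputable def hilb (k : Type*) [Field k] (e : ℕ)
    (J : Ideal (MvPolynomial (Fin e) k)) (i : ℕ) : ℕ :=
  Module.finrank k
    (((qIdeal k e ^ i ⊔ J).map (Ideal.Quotient.mk (qIdeal k e ^ (i + 1) ⊔ J))).restrictScalars k)

/-- An ideal is homogeneous if it is generated by homogeneous polynomials. -/
def IsHomogeneousIdeal (k : Type*) [Field k] (e : ℕ)
    (J : Ideal (MvPolynomial (Fin e) k)) : Prop :=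
  ∃ S : Set (MvPolynomial (Fin e) k),
    (∀ p ∈ S, ∃ n, MvPolynomial.IsHomogeneous p n) ∧ J = Ideal.span S

/-- Hilbert function of the ambient ring: `h_Q(i) = binom(e−1+i, e−1)`. -/
def hQ (e i : ℕ) : ℕ := Nat.choose (e - 1 + i) (e - 1)

/-- `h_Q(σ − i)`, interpreted as `0` for `i > σ`. -/
def hQat (e σ i : ℕ) : ℕ := if i ≤ σ then hQ e (σ - i) else 0

/-- `Q/J` has type 1 (is artinian Gorenstein): the socle `(J : q)/J` is spanned
by one nonzero element. -/
def HasTypeOne (k : Type*) [Field k] (e : ℕ) (J : Ideal (MvPolynomial (Fin e) k)) : Prop :=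
  ∃ x, x ∉ J ∧ J.colon (qIdeal k e) = J ⊔ Ideal.span {x}

/-- `Q/J` has type 2: the socle `(J : q)/J` is spanned by two elements whose
cosets are linearly independent over `k`. -/
def HasTypeTwo (k : Type*) [Field k] (e : ℕ) (J : Ideal (MvPolynomial (Fin e) k)) : Prop :=
  ∃ x y, J.colon (qIdeal k e) = J ⊔ Ideal.span {x, y} ∧
    ∀ a b : MvPolynomial (Fin e) k, a * x + b * y ∈ J →
      a ∈ qIdeal k e ∧ b ∈ qIdeal k e

/-- `σ` is the socle degree of `Q/J`. -/
def SocDeg (k : Type*) [Field k] (e : ℕ) (J : Ideal (MvPolynomial (Fin e) k)) (σ : ℕ) : Prop :=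
  ¬ qIdeal k e ^ σ ≤ J ∧ qIdeal k e ^ (σ + 1) ≤ J

/-- `τ` is the initial degree of `J`. -/
def IniDeg (k : Type*) [Field k] (e : ℕ) (J : Ideal (MvPolynomial (Fin e) k)) (τ : ℕ) : Prop :=
  J ≤ qIdeal k e ^ τ ∧ ¬ J ≤ qIdeal k e ^ (τ + 1)

/-- `Q/J` is a compressed Gorenstein ring of socle degree `σ`. -/
def CompressedGor (k : Type*) [Field k] (e : ℕ) (J : Ideal (MvPolynomial (Fin e) k)) (σ : ℕ) : Prop :=
  ∀ i, hilb k e J i = min (hQ e i) (hQat e σ i)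

/-!
For a homogeneous ideal `J`, the Hilbert function `dim_k (q^i + J)/(q^(i+1) + J)` is the codimension
of `J_i` in the space `Q_i` of forms of degree `i`, so `dim_k J_t = h_Q(t) - h_R(t)` with
`h_R(t) = min (h_Q(t), h_Q(s1 - t) + h_Q(s - t))`. Since `h_Q(t) - h_Q(s - t)` is `t + 1` for
odd `s` and `2t + 1` for even `s`, this is the claimed value as soon as `t ≤ s1`. If `s1 < t`, then
`2 s1 ≤ s`, and compressedness of `I2` says that `I2` has no forms of degree `≤ s1`; hence
`I2 ⊆ q^(s1+1) ⊆ I1`, and `I1 ∩ I2 = I2` would be Gorenstein, contradicting type two.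
-/

attribute [local instance] MvPolynomial.gradedAlgebra

section HomogeneousComponents

variable {σ R : Type*} [CommRing R]

theorem homogeneousComponent_eq_zero_of_mem_pow_idealOfVars {p : MvPolynomial σ R} {n m : ℕ}
    (hp : p ∈ idealOfVars σ R ^ n) (hm : m < n) : homogeneousComponent m p = 0 := by
  ext x
  rw [coeff_homogeneousComponent, coeff_zero]
  split_ifs with hx
  · exact (mem_pow_idealOfVars_iff' n p).1 hp x (by omega)
  · rfl

theorem mem_pow_idealOfVars_of_mem_homogeneousSubmodule {p : MvPolynomial σ R} {n : ℕ}
    (hp : p ∈ homogeneousSubmodule σ R n) : p ∈ idealOfVars σ R ^ n :=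
  (mem_pow_idealOfVars_iff n p).2 fun x hx => by
    rw [Finsupp.degree_eq_weight_one]; exact (hp (mem_support_iff.mp hx)).ge

theorem sub_homogeneousComponent_mem_pow_succ_idealOfVars {p : MvPolynomial σ R} {n : ℕ}
    (hp : p ∈ idealOfVars σ R ^ n) : p - homogeneousComponent n p ∈ idealOfVars σ R ^ (n + 1) := by
  rw [mem_pow_idealOfVars_iff'] at hp ⊢
  intro x hx
  rw [coeff_sub, coeff_homogeneousComponent]
  split_ifs with h
  · exact sub_self _
  · rw [hp x (by omega), sub_zero]

theorem mem_pow_succ_idealOfVars_sup_iff {J : Ideal (MvPolynomial σ R)}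
    (hJ : J.IsHomogeneous (homogeneousSubmodule σ R)) {p : MvPolynomial σ R} {n : ℕ}
    (hp : p ∈ homogeneousSubmodule σ R n) : p ∈ idealOfVars σ R ^ (n + 1) ⊔ J ↔ p ∈ J := by
  refine ⟨fun h => ?_, fun h => Ideal.mem_sup_right h⟩
  obtain ⟨a, ha, b, hb, rfl⟩ := Submodule.mem_sup.mp h
  rw [← homogeneousComponent_eq_self hp, map_add,
    homogeneousComponent_eq_zero_of_mem_pow_idealOfVars ha n.lt_succ_self, zero_add]
  exact homogeneousComponent_mem_of_mem hJ hb n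

theorem map_homogeneousSubmodule_eq_map_pow_idealOfVars_sup (J : Ideal (MvPolynomial σ R))
    (n : ℕ) :
    (homogeneousSubmodule σ R n).map
        (Ideal.Quotient.mkₐ R (idealOfVars σ R ^ (n + 1) ⊔ J)).toLinearMap =
      ((idealOfVars σ R ^ n ⊔ J).map
        (Ideal.Quotient.mk (idealOfVars σ R ^ (n + 1) ⊔ J))).restrictScalars R := by
  ext x
  simp only [Submodule.mem_map, Submodule.restrictScalars_mem, AlgHom.toLinearMap_apply,
    Ideal.Quotient.mkₐ_eq_mk]
  constructor
  · rintro ⟨p, hp, rfl⟩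
    exact Ideal.mem_map_of_mem _
      (Ideal.mem_sup_left (mem_pow_idealOfVars_of_mem_homogeneousSubmodule hp))
  · intro hx
    obtain ⟨y, hy, rfl⟩ := (Ideal.mem_map_iff_of_surjective _ Ideal.Quotient.mk_surjective).mp hx
    obtain ⟨a, ha, b, hb, rfl⟩ := Submodule.mem_sup.mp hy
    refine ⟨homogeneousComponent n a, homogeneousComponent_mem n a, ?_⟩
    rw [Ideal.Quotient.mk_eq_mk_iff_sub_mem, ← neg_sub, neg_mem_iff, add_sub_right_comm]
    exact add_mem (Ideal.mem_sup_left (sub_homogeneousComponent_mem_pow_succ_idealOfVars ha))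
      (Ideal.mem_sup_right hb)

theorem le_pow_idealOfVars_of_inf_homogeneousSubmodule_eq_bot {J : Ideal (MvPolynomial σ R)}
    (hJ : J.IsHomogeneous (homogeneousSubmodule σ R)) {n : ℕ}
    (hlow : ∀ d < n, J.restrictScalars R ⊓ homogeneousSubmodule σ R d = ⊥) :
    J ≤ idealOfVars σ R ^ n := by
  intro p hp
  rw [mem_pow_idealOfVars_iff']
  intro x hx
  have hcomp : homogeneousComponent x.degree p = 0 := by
    rw [← Submodule.mem_bot R, ← hlow _ hx]
    exact ⟨homogeneousComponent_mem_of_mem hJ hp _, homogeneousComponent_mem _ p⟩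
  simpa [coeff_homogeneousComponent] using congrArg (coeff x) hcomp

end HomogeneousComponents

section Dimension

variable {σ k : Type*} [Fintype σ] [Field k]

theorem setOf_degree_eq_eq_finsuppAntidiag [DecidableEq σ] (n : ℕ) :
    {d : σ →₀ ℕ | d.degree = n} = ((Finset.univ : Finset σ).finsuppAntidiag n : Set (σ →₀ ℕ)) := by
  ext d
  simp [Finsupp.degree_eq_sum]

instance finiteDimensional_homogeneousSubmodule (n : ℕ) :
    FiniteDimensional k (homogeneousSubmodule σ k n) := by
  classical
  rw [homogeneousSubmodule_eq_finsupp_supported, setOf_degree_eq_eq_finsuppAntidiag]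
  exact Module.Finite.equiv (AddMonoidAlgebra.supportedEquivFinsupp _).symm

theorem finrank_homogeneousSubmodule (n : ℕ) :
    Module.finrank k (homogeneousSubmodule σ k n) = (Fintype.card σ + n - 1).choose n := by
  classical
  rw [homogeneousSubmodule_eq_finsupp_supported, setOf_degree_eq_eq_finsuppAntidiag,
    (AddMonoidAlgebra.supportedEquivFinsupp _).finrank_eq, Module.finrank_finsupp_self]
  simp [Finset.card_finsuppAntidiag_nat_eq_choose]

end Dimension

theorem hQat_of_le {e σ i : ℕ} (h : i ≤ σ) : hQat e σ i = hQ e (σ - i) := if_pos h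

theorem hQ_three (n : ℕ) : hQ 3 n = (n + 2).choose 2 := by rw [hQ, add_comm]

theorem hQ_three_succ (n : ℕ) : hQ 3 (n + 1) = hQ 3 n + (n + 2) := by
  rw [hQ_three, hQ_three, show n + 1 + 2 = n + 2 + 1 by ring, Nat.choose_succ_succ',
    Nat.choose_one_right, add_comm]

section HilbertFunction

variable {k : Type*} [Field k] {e : ℕ}

theorem finrank_homogeneousSubmodule_eq_hQ (he : 1 ≤ e) (n : ℕ) :
    Module.finrank k (homogeneousSubmodule (Fin e) k n) = hQ e n := by
  rw [finrank_homogeneousSubmodule, Fintype.card_fin, hQ, show e + n - 1 = e - 1 + n by omega]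
  exact Nat.choose_symm_add.symm

theorem IsHomogeneousIdeal.isHomogeneous {J : Ideal (MvPolynomial (Fin e) k)}
    (hJ : IsHomogeneousIdeal k e J) : J.IsHomogeneous (homogeneousSubmodule (Fin e) k) := by
  obtain ⟨S, hS, rfl⟩ := hJ
  exact Ideal.homogeneous_span _ S fun p hp => hS p hp

theorem hilb_add_finrank_inf_homogeneousSubmodule {J : Ideal (MvPolynomial (Fin e) k)}
    (hJ : J.IsHomogeneous (homogeneousSubmodule (Fin e) k)) (i : ℕ) :
    hilb k e J i + Module.finrank k ↥(J.restrictScalars k ⊓ homogeneousSubmodule (Fin e) k i) =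
      Module.finrank k (homogeneousSubmodule (Fin e) k i) := by
  set Q := homogeneousSubmodule (Fin e) k i
  set g := (Ideal.Quotient.mkₐ k (qIdeal k e ^ (i + 1) ⊔ J)).toLinearMap ∘ₗ Q.subtype
  have hrange : LinearMap.range g = ((qIdeal k e ^ i ⊔ J).map
      (Ideal.Quotient.mk (qIdeal k e ^ (i + 1) ⊔ J))).restrictScalars k := by
    rw [LinearMap.range_comp, Submodule.range_subtype]
    exact map_homogeneousSubmodule_eq_map_pow_idealOfVars_sup J i
  have hker : LinearMap.ker g = (J.restrictScalars k ⊓ Q).comap Q.subtype := by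
    ext ⟨p, hp⟩
    simp only [g, LinearMap.mem_ker, LinearMap.comp_apply, Submodule.subtype_apply,
      AlgHom.toLinearMap_apply, Ideal.Quotient.mkₐ_eq_mk, Ideal.Quotient.eq_zero_iff_mem,
      Submodule.mem_comap, Submodule.mem_inf, Submodule.restrictScalars_mem, and_iff_left hp]
    exact mem_pow_succ_idealOfVars_sup_iff hJ hp
  rw [hilb, ← hrange, ← (Submodule.comapSubtypeEquivOfLe inf_le_right).finrank_eq, ← hker]
  exact g.finrank_range_add_finrank_ker

theorem CompressedGor.hilb_eq_hQ {J : Ideal (MvPolynomial (Fin e) k)} {σ d : ℕ}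
    (hJ : CompressedGor k e J σ) (hd : 2 * d ≤ σ) : hilb k e J d = hQ e d := by
  rw [hJ d, hQat_of_le (by omega)]
  exact min_eq_left (Nat.choose_le_choose _ (by omega))

theorem CompressedGor.inf_homogeneousSubmodule_eq_bot {J : Ideal (MvPolynomial (Fin e) k)}
    {σ d : ℕ} (hJ : CompressedGor k e J σ)
    (hhom : J.IsHomogeneous (homogeneousSubmodule (Fin e) k)) (he : 1 ≤ e) (hd : 2 * d ≤ σ) :
    J.restrictScalars k ⊓ homogeneousSubmodule (Fin e) k d = ⊥ := by
  have hsum := hilb_add_finrank_inf_homogeneousSubmodule hhom d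
  rw [hJ.hilb_eq_hQ hd, finrank_homogeneousSubmodule_eq_hQ he] at hsum
  have : FiniteDimensional k ↥(J.restrictScalars k ⊓ homogeneousSubmodule (Fin e) k d) :=
    Submodule.finiteDimensional_of_le inf_le_right
  exact Submodule.finrank_eq_zero.mp (by omega)

end HilbertFunction

section Socle

variable {k : Type*} [Field k] {e : ℕ}

theorem one_notMem_qIdeal : (1 : MvPolynomial (Fin e) k) ∉ qIdeal k e := by
  simpa [qIdeal] using (C_mem_pow_idealOfVars_iff (σ := Fin e) 1 (1 : k)).not.2 (by simp)

/- Modulo `J` both socle generators `x, y` are multiples `c z, c' z` of the Gorenstein socle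
generator `z`; the relation `c' x - c y ∈ J` forces `c ∈ q`, hence `x ∈ J`. -/
theorem not_hasTypeTwo_of_hasTypeOne {J : Ideal (MvPolynomial (Fin e) k)}
    (hJ : HasTypeOne k e J) : ¬ HasTypeTwo k e J := by
  rintro ⟨x, y, hxy, hind⟩
  obtain ⟨z, -, hz⟩ := hJ
  have hsocle : ∀ w ∈ J.colon (qIdeal k e), ∃ c, w - c * z ∈ J := by
    intro w hw
    rw [hz] at hw
    obtain ⟨j, hj, _, hcz, rfl⟩ := Submodule.mem_sup.mp hw
    obtain ⟨c, rfl⟩ := Ideal.mem_span_singleton'.mp hcz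
    exact ⟨c, by simpa using hj⟩
  obtain ⟨c, hc⟩ := hsocle x (hxy ▸ Ideal.mem_sup_right (Ideal.subset_span (by simp)))
  obtain ⟨c', hc'⟩ := hsocle y (hxy ▸ Ideal.mem_sup_right (Ideal.subset_span (by simp)))
  have hrel : c' * x + -c * y ∈ J := by
    have : c' * x + -c * y = c' * (x - c * z) - c * (y - c' * z) := by ring
    rw [this]
    exact sub_mem (J.mul_mem_left _ hc) (J.mul_mem_left _ hc')
  have hcq : c ∈ qIdeal k e := neg_mem_iff.mp (hind _ _ hrel).2
  have hzq : z ∈ J.colon (qIdeal k e) := hz ▸ Ideal.mem_sup_right (Ideal.mem_span_singleton_self z)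
  have hcz : c * z ∈ J := by simpa [mul_comm] using Submodule.mem_colon.mp hzq c hcq
  have hxJ : x ∈ J := by simpa using add_mem hc hcz
  exact one_notMem_qIdeal (hind 1 0 (by simpa using hxJ)).1

end Socle

theorem stmt16_general (k : Type*) [Field k]
    (I1 I2 : Ideal (MvPolynomial (Fin 3) k))
    (h1hom : IsHomogeneousIdeal k 3 I1) (h2hom : IsHomogeneousIdeal k 3 I2)
    (h2gor : HasTypeOne k 3 I2)
    (s1 s t a : ℕ)
    (hs1 : SocDeg k 3 I1 s1) (hle : s1 ≤ s)
    (h2c : CompressedGor k 3 I2 s)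
    (htype2 : HasTypeTwo k 3 (I1 ⊓ I2))
    (ht : (s + 2) / 2 = t)
    -- `R` is compressed with socle polynomial `χ^{s1} + χ^{s}`
    (hcomp : ∀ i, hilb k 3 (I1 ⊓ I2) i = min (hQ 3 i) (hQat 3 s1 i + hQat 3 s i))
    (ha : a = s1 - t + 1) :
    (Odd s → Module.finrank k
        ↥((Submodule.restrictScalars k (I1 ⊓ I2)) ⊓
          (MvPolynomial.homogeneousSubmodule (Fin 3) k t)) =
      (t + 1) - Nat.choose (a + 1) 2) ∧
    (Even s → Module.finrank k
        ↥((Submodule.restrictScalars k (I1 ⊓ I2)) ⊓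
          (MvPolynomial.homogeneousSubmodule (Fin 3) k t)) =
      (2 * t + 1) - Nat.choose (a + 1) 2) := by
  have hI1 := h1hom.isHomogeneous
  have hI2 := h2hom.isHomogeneous
  have hts1 : t ≤ s1 := by
    by_contra! hlt
    have hI2I1 : I2 ≤ I1 := le_trans (le_pow_idealOfVars_of_inf_homogeneousSubmodule_eq_bot hI2
      fun d hd => h2c.inf_homogeneousSubmodule_eq_bot hI2 (by norm_num) (by omega)) hs1.2
    rw [inf_eq_right.mpr hI2I1] at htype2
    exact not_hasTypeTwo_of_hasTypeOne h2gor htype2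
  have hdim := hilb_add_finrank_inf_homogeneousSubmodule (hI1.inf hI2) t
  rw [hcomp, finrank_homogeneousSubmodule_eq_hQ (by norm_num), hQat_of_le hts1,
    hQat_of_le (hts1.trans hle), hQ_three (s1 - t), show s1 - t + 2 = a + 1 by omega] at hdim
  have key : ∀ c, hQ 3 t = hQ 3 (s - t) + c → Module.finrank k
      ↥(Submodule.restrictScalars k (I1 ⊓ I2) ⊓ homogeneousSubmodule (Fin 3) k t) =
        c - (a + 1).choose 2 := by
    intro c hc
    omega
  refine ⟨fun ⟨m, hm⟩ => key _ ?_, fun ⟨m, hm⟩ => key _ ?_⟩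
  · obtain rfl : t = m + 1 := by omega
    rw [show s - (m + 1) = m by omega, hQ_three_succ]
  · obtain ⟨n, rfl⟩ : ∃ n, m = n + 1 := Nat.exists_eq_add_one.mpr (by omega)
    obtain rfl : t = n + 2 := by omega
    rw [show s - (n + 2) = n by omega, hQ_three_succ, hQ_three_succ]
    ring

/-- Let `Q = k[[x,y,z]]` (graded setting) and suppose
`R = Q/(I1 ∩ I2)` is compressed of type 2 with socle polynomial `χ^{s1}+χ^{s}`,
arising from homogeneous compressed Gorenstein ideals `I1, I2`, with
`⌈(s+1)/2⌉ = t` the initial degree of `I1 ∩ I2` and `a = s1 − t + 1`. Then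
`β_{1t}(R)`, i.e. the number of minimal generators of `I1 ∩ I2` of degree `t`,
which equals `dim_k (I1 ∩ I2)_t` since `t` is the initial degree, satisfies
`β_{1t}(R) = (t+1) − binom(a+1,2)` if `s` is odd and
`β_{1t}(R) = (2t+1) − binom(a+1,2)` if `s` is even. -/
theorem stmt16 (k : Type*) [Field k]
    (I1 I2 : Ideal (MvPolynomial (Fin 3) k))
    (h1hom : IsHomogeneousIdeal k 3 I1) (h2hom : IsHomogeneousIdeal k 3 I2)
    (h1p : I1.IsPrimary) (h1r : I1.radical = qIdeal k 3)
    (h2p : I2.IsPrimary) (h2r : I2.radical = qIdeal k 3)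
    (h1q2 : I1 ≤ qIdeal k 3 ^ 2) (h2q2 : I2 ≤ qIdeal k 3 ^ 2)
    (h1gor : HasTypeOne k 3 I1) (h2gor : HasTypeOne k 3 I2)
    (s1 s t a : ℕ)
    (hs1 : SocDeg k 3 I1 s1) (hs2 : SocDeg k 3 I2 s) (hle : s1 ≤ s)
    (h1c : CompressedGor k 3 I1 s1) (h2c : CompressedGor k 3 I2 s)
    (htype2 : HasTypeTwo k 3 (I1 ⊓ I2))
    (hsR : SocDeg k 3 (I1 ⊓ I2) s)
    (htini : IniDeg k 3 (I1 ⊓ I2) t)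
    (ht : (s + 2) / 2 = t)
    -- `R` is compressed with socle polynomial `χ^{s1} + χ^{s}`
    (hcomp : ∀ i, hilb k 3 (I1 ⊓ I2) i = min (hQ 3 i) (hQat 3 s1 i + hQat 3 s i))
    (ha : a = s1 - t + 1) :
    (Odd s → Module.finrank k
        ↥((Submodule.restrictScalars k (I1 ⊓ I2)) ⊓
          (MvPolynomial.homogeneousSubmodule (Fin 3) k t)) =
      (t + 1) - Nat.choose (a + 1) 2) ∧
    (Even s → Module.finrank k
        ↥((Submodule.restrictScalars k (I1 ⊓ I2)) ⊓
          (MvPolynomial.homogeneousSubmodule (Fin 3) k t)) =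
      (2 * t + 1) - Nat.choose (a + 1) 2) :=
  stmt16_general k I1 I2 h1hom h2hom h2gor s1 s t a hs1 hle h2c htype2 ht hcomp ha
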